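/- arXiv:1011.4833 — 2 statements merged into one kernel-verified Lean document; each statement's English description precedes it below -/
import Mathlib

section
/- Regular disjunction does not right-distribute over ordered disjunction: for distinct atoms f, g, h, the theory {(f × g) ∨ h, g} has exactly two equilibrium models, ⟨{f,g},{f,g}⟩ and ⟨{g},{g}⟩, whereas ⟨{g,h},{g,h}⟩ is an equilibrium model of the theory {(f ∨ h) × (g ∨ h), g}. In particular (f × g) ∨ h and (f ∨ h) × (g ∨ h) are not HT-equivalent. -/
inductive Form (α : Type) : Type
  | atom : α → Form α
  | fls  : Form α
  | and  : Form α → Form α → Form α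
  | or   : Form α → Form α → Form α
  | imp  : Form α → Form α → Form α

namespace Form

variable {α : Type}

/-- ¬F abbreviates F → ⊥ -/
def neg (F : Form α) : Form α := imp F fls

/-- ⊤ abbreviates ⊥ → ⊥ -/
def tru : Form α := imp fls fls

/-- ordered disjunction F × G := F ∨ (¬F ∧ G) -/
def ox (F G : Form α) : Form α := or F (and (neg F) G)

/-- classical satisfaction -/
def csat (T : Set α) : Form α → Prop
  | atom p  => p ∈ T
  | fls     => False
  | and F G => csat T F ∧ csat T G
  | or F G  => csat T F ∨ csat T G
  | imp F G => csat T F → csat T G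

/-- here-and-there satisfaction (for interpretations ⟨H,T⟩ with H ⊆ T) -/
def htsat (H T : Set α) : Form α → Prop
  | atom p  => p ∈ H
  | fls     => False
  | and F G => htsat H T F ∧ htsat H T G
  | or F G  => htsat H T F ∨ htsat H T G
  | imp F G => (csat T F → csat T G) ∧ (¬ htsat H T F ∨ htsat H T G)

end Form

/-- HT-equivalence: satisfied by exactly the same HT-interpretations -/
def HTEquiv {α : Type} (F G : Form α) : Prop :=
  ∀ H T : Set α, H ⊆ T → (Form.htsat H T F ↔ Form.htsat H T G)

/-- ⟨T,T⟩ is an equilibrium model of the theory Γ -/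
def EqModel {α : Type} (Γ : Set (Form α)) (T : Set α) : Prop :=
  (∀ F ∈ Γ, Form.htsat T T F) ∧ ∀ H : Set α, H ⊂ T → ¬ (∀ F ∈ Γ, Form.htsat H T F)

/-- iterated ordered disjunction, associated to the left; ⊥ when empty -/
def oxList {α : Type} : List (Form α) → Form α
  | []      => Form.fls
  | a :: as => as.foldl Form.ox a

/-- iterated disjunction, associated to the left; ⊥ when empty -/
def orList {α : Type} : List (Form α) → Form α
  | []      => Form.fls
  | a :: as => as.foldl Form.or a

/-- iterated conjunction, associated to the left; ⊤ when empty -/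
def andList {α : Type} : List (Form α) → Form α
  | []      => Form.tru
  | a :: as => as.foldl Form.and a

/-!
Ordered disjunction `F × G` holds at `⟨H, T⟩` iff `F` holds there, or `G` holds there while
`F` is classically false in `T`. In `{(f × g) ∨ h, g}` the atom `h` is never supported:
`⟨T ∩ {f, g}, T⟩` already satisfies the theory, so equilibrium models lie inside `{f, g}`.
In `(f ∨ h) × (g ∨ h)`, on the other hand, `f ∨ h` is classically true in `{g, h}`, so
`f ∨ h` itself must hold at `⟨H, {g, h}⟩`, and with `f` absent this forces `h ∈ H`.
HT-equivalent formulas can be swapped in a theory without changing its equilibrium models,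
so the two formulas are not HT-equivalent.
-/

namespace Form

variable {α : Type} {H T : Set α}

theorem htsat.csat (hHT : H ⊆ T) : ∀ {F : Form α}, htsat H T F → csat T F
  | atom _, hp => hHT hp
  | and _ _, ⟨hF, hG⟩ => ⟨hF.csat hHT, hG.csat hHT⟩
  | or _ _, Or.inl hF => Or.inl (hF.csat hHT)
  | or _ _, Or.inr hG => Or.inr (hG.csat hHT)
  | imp _ _, ⟨hFG, _⟩ => hFG

theorem htsat_neg_iff (hHT : H ⊆ T) {F : Form α} : htsat H T (neg F) ↔ ¬ csat T F := by
  simp only [neg, htsat, csat, or_false, imp_false, and_iff_left_iff_imp]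
  exact mt (htsat.csat hHT)

theorem htsat_ox_iff (hHT : H ⊆ T) {F G : Form α} :
    htsat H T (ox F G) ↔ htsat H T F ∨ ¬ csat T F ∧ htsat H T G := by
  rw [ox, htsat, htsat, htsat_neg_iff hHT]

end Form

theorem eqModel_iff_eq_of_subset {α : Type} {Γ : Set (Form α)} {T : Set α} :
    EqModel Γ T ↔ (∀ F ∈ Γ, Form.htsat T T F) ∧
      ∀ H ⊆ T, (∀ F ∈ Γ, Form.htsat H T F) → H = T := by
  refine and_congr_right fun _ => forall_congr' fun H => ?_
  rw [Set.ssubset_iff_subset_ne]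
  tauto

theorem HTEquiv.eqModel_insert_iff {α : Type} {F G : Form α} (hFG : HTEquiv F G)
    {Γ : Set (Form α)} {T : Set α} : EqModel (insert F Γ) T ↔ EqModel (insert G Γ) T := by
  simp only [eqModel_iff_eq_of_subset, Set.forall_mem_insert, hFG T T subset_rfl]
  refine and_congr_right fun _ => forall₂_congr fun H hHT => ?_
  rw [hFG H T hHT]

section Atoms

open Form

variable {α : Type} {f g h : α}

theorem eqModel_or_ox_atom_iff (hgh : g ≠ h) {T : Set α} :
    EqModel {or (ox (atom f) (atom g)) (atom h), atom g} T ↔ T = {f, g} ∨ T = {g} := by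
  have sat_iff : ∀ H ⊆ T,
      (∀ F ∈ ({or (ox (atom f) (atom g)) (atom h), atom g} : Set (Form α)), htsat H T F) ↔
        ((f ∈ H ∨ f ∉ T ∧ g ∈ H) ∨ h ∈ H) ∧ g ∈ H := fun H hHT => by
    simp [htsat_ox_iff hHT, htsat, csat]
  rw [eqModel_iff_eq_of_subset, sat_iff T subset_rfl]
  constructor
  · rintro ⟨⟨-, hgT⟩, hmin⟩
    have hTfg : T ⊆ {f, g} := by
      refine Set.inter_eq_left.1 <|
        hmin _ Set.inter_subset_left ((sat_iff _ Set.inter_subset_left).2 ?_)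
      by_cases hfT : f ∈ T <;> simp [hfT, hgT]
    by_cases hfT : f ∈ T
    · exact Or.inl (hTfg.antisymm (Set.pair_subset_iff.2 ⟨hfT, hgT⟩))
    · refine Or.inr (Set.eq_singleton_iff_unique_mem.2 ⟨hgT, fun x hx => ?_⟩)
      rcases hTfg hx with rfl | rfl
      exacts [absurd hx hfT, rfl]
  · rintro (rfl | rfl)
    · refine ⟨by simp, fun H hH hsat => ?_⟩
      obtain ⟨hsat, hgH⟩ := (sat_iff H hH).1 hsat
      refine hH.antisymm (Set.pair_subset_iff.2 ⟨?_, hgH⟩)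
      rcases hsat with (hfH | ⟨hf, -⟩) | hhH
      · exact hfH
      · simp at hf
      · rcases hH hhH with hhf | hhg
        exacts [hhf ▸ hhH, absurd hhg.symm hgh]
    · refine ⟨by simp [em], fun H hH hsat => ?_⟩
      exact hH.antisymm (Set.singleton_subset_iff.2 ((sat_iff H hH).1 hsat).2)

theorem eqModel_ox_or_atom (hfg : f ≠ g) (hfh : f ≠ h) :
    EqModel {ox (or (atom f) (atom h)) (or (atom g) (atom h)), atom g} {g, h} := by
  have sat_iff : ∀ H ⊆ {g, h},
      (∀ F ∈ ({ox (or (atom f) (atom h)) (or (atom g) (atom h)), atom g} : Set (Form α)),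
        htsat H {g, h} F) ↔ (f ∈ H ∨ h ∈ H) ∧ g ∈ H := fun H hHT => by
    simp [htsat_ox_iff hHT, htsat, csat]
  rw [eqModel_iff_eq_of_subset, sat_iff _ subset_rfl]
  refine ⟨by simp, fun H hH hsat => ?_⟩
  obtain ⟨hsat, hgH⟩ := (sat_iff H hH).1 hsat
  refine hH.antisymm (Set.pair_subset_iff.2 ⟨hgH, ?_⟩)
  rcases hsat with hfH | hhH
  · rcases hH hfH with hfg' | hfh'
    exacts [absurd hfg' hfg, absurd hfh' hfh]
  · exact hhH

end Atoms

theorem or_no_right_distrib_over_ox {α : Type} (f g h : α)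
    (hfg : f ≠ g) (hfh : f ≠ h) (hgh : g ≠ h) :
    ({T : Set α |
        EqModel {Form.or (Form.ox (Form.atom f) (Form.atom g)) (Form.atom h),
                 Form.atom g} T} = {{f, g}, {g}}) ∧
    EqModel {Form.ox (Form.or (Form.atom f) (Form.atom h))
                     (Form.or (Form.atom g) (Form.atom h)),
             Form.atom g} {g, h} ∧
    ¬ HTEquiv (Form.or (Form.ox (Form.atom f) (Form.atom g)) (Form.atom h))
        (Form.ox (Form.or (Form.atom f) (Form.atom h))
                 (Form.or (Form.atom g) (Form.atom h))) := by
  have model_gh := eqModel_ox_or_atom hfg hfh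
  refine ⟨Set.ext fun _ => eqModel_or_ox_atom_iff hgh, model_gh, fun hequiv => ?_⟩
  have hmem : h ∈ ({g, h} : Set α) := Set.mem_insert_of_mem g rfl
  rcases (eqModel_or_ox_atom_iff hgh).1 (hequiv.eqModel_insert_iff.2 model_gh) with e | e <;>
    rw [e] at hmem <;> simp [hfh.symm, hgh.symm] at hmem
end

section
/- Let A be a list of n ≥ 0 formulas. Then the iterated ordered disjunction (×A) is HT-equivalent to the disjunction, over i = 1,…,n, of the formulas (∧¬A[1..i−1]) ∧ A[i], where ¬A[1..i−1] is the list of negations of the first i−1 elements of A. -/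
/-
Since ⟨H,T⟩ ⊨ F implies T ⊨ F, the HT-models of ¬F are exactly those with T ⊭ F, so
⟨H,T⟩ ⊨ F × G iff ⟨H,T⟩ ⊨ F, or T ⊭ F and ⟨H,T⟩ ⊨ G. With this reading `×` is associative, and
unfolding (×A) from the head shows that ⟨H,T⟩ ⊨ (×A) iff for some i, T falsifies A[1..i−1] and
⟨H,T⟩ ⊨ A[i] — which is precisely HT-satisfaction of the i-th disjunct on the right.
-/

namespace Form

variable {α : Type} {H T : Set α}

theorem csat_of_htsat (hHT : H ⊆ T) {F : Form α} (h : htsat H T F) : csat T F := by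
  induction F with
  | atom p => exact hHT h
  | fls => exact h
  | and F G ihF ihG => exact ⟨ihF h.1, ihG h.2⟩
  | or F G ihF ihG => exact h.imp ihF ihG
  | imp F G => exact h.1

theorem htsat_neg (hHT : H ⊆ T) (F : Form α) : htsat H T (neg F) ↔ ¬ csat T F :=
  ⟨fun h => h.1, fun h => ⟨h, Or.inl (mt (csat_of_htsat hHT) h)⟩⟩

theorem csat_ox (F G : Form α) : csat T (ox F G) ↔ csat T F ∨ csat T G := by
  simp only [ox, neg, csat]
  tauto

theorem htsat_ox (hHT : H ⊆ T) (F G : Form α) :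
    htsat H T (ox F G) ↔ htsat H T F ∨ ¬ csat T F ∧ htsat H T G := by
  rw [ox, htsat, htsat, htsat_neg hHT]

theorem htsat_foldl_or (L : List (Form α)) (a : Form α) :
    htsat H T (L.foldl or a) ↔ ∃ x ∈ a :: L, htsat H T x := by
  induction L generalizing a with
  | nil => simp
  | cons b L ih => simp [ih, htsat, or_assoc]

theorem htsat_foldl_and (L : List (Form α)) (a : Form α) :
    htsat H T (L.foldl and a) ↔ ∀ x ∈ a :: L, htsat H T x := by
  induction L generalizing a with
  | nil => simp
  | cons b L ih => simp [ih, htsat, and_assoc]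

theorem htsat_orList (A : List (Form α)) : htsat H T (orList A) ↔ ∃ x ∈ A, htsat H T x := by
  cases A with
  | nil => simp [orList, htsat]
  | cons a L => exact htsat_foldl_or L a

theorem htsat_andList (A : List (Form α)) : htsat H T (andList A) ↔ ∀ x ∈ A, htsat H T x := by
  cases A with
  | nil => simp [andList, tru, htsat, csat]
  | cons a L => exact htsat_foldl_and L a

-- Under HT-satisfaction `×` is associative, so the left-nested fold also unfolds from the head.
theorem htsat_oxList_cons (hHT : H ⊆ T) (a : Form α) (L : List (Form α)) :
    htsat H T (oxList (a :: L)) ↔ htsat H T a ∨ ¬ csat T a ∧ htsat H T (oxList L) := by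
  induction L generalizing a with
  | nil => simp [oxList, htsat]
  | cons b L ih =>
    change htsat H T (oxList (ox a b :: L)) ↔ _
    rw [ih, ih, htsat_ox hHT, csat_ox]
    tauto

theorem htsat_oxList (hHT : H ⊆ T) (A : List (Form α)) :
    htsat H T (oxList A) ↔
      ∃ i : Fin A.length, (∀ x ∈ A.take i, ¬ csat T x) ∧ htsat H T (A.get i) := by
  induction A with
  | nil => simp [oxList, htsat]
  | cons a L ih =>
    rw [htsat_oxList_cons hHT, ih]
    refine Iff.trans ?_ Fin.exists_fin_succ.symm
    simp [and_assoc]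

end Form

/-- (×A) is HT-equivalent to ⋁_{i=1..n} (∧¬A[1..i−1]) ∧ A[i]. -/
theorem oxList_unfold_disjunction {α : Type} (A : List (Form α)) :
    HTEquiv (oxList A)
      (orList ((List.range A.length).attach.map (fun i =>
        Form.and (andList ((A.take i.1).map Form.neg))
          (A.get ⟨i.1, List.mem_range.mp i.2⟩)))) := by
  intro H T hHT
  rw [Form.htsat_oxList hHT, Form.htsat_orList]
  simp [Form.htsat, Form.htsat_andList, - List.map_take, Form.htsat_neg hHT, Fin.exists_iff]
end
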